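/- Let Σ be a nonempty finite alphabet and let x₁, x₂, …, x_n be nonempty words over Σ all of the same length. Then the language L_{x₁=x₂=⋯=x_n} = {z ∈ Σ* : |z|_{x₁} = |z|_{x₂} = ⋯ = |z|_{x_n}} is infinite. -/

import Mathlib

/-!
The cyclic count of `x` in a circular word is additive under splicing two circular words that
share a prefix of length at least `|x| - 1`, and it is invariant under rotation. Summed over all
words `u` of length `N` it equals `N * |Σ| ^ (N - |x|)` by rotation symmetry, whatever `x` is.
Splice all words `a ++ b` with `|a| = |b| = j` into one word `w`: group them by `a` (common prefix
`a`), rotate each group to begin with the same word `b₀`, and splice the groups. Then every `x`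
with `|x| = k ≤ j` has the same cyclic count in `w`, and `w ^ m ++ w.take (k - 1)` contains each
such `x` exactly `m` times its cyclic count in `w`.
-/

/-- Number of (possibly overlapping) occurrences of `x` as a contiguous
subword (factor) of `z`. -/
def occCount {α : Type*} [DecidableEq α] (x z : List α) : ℕ :=
  ((List.range (z.length + 1)).filter (fun i => decide (x <+: z.drop i))).length

/-- `wpow w n` is the word `w` concatenated with itself `n` times. -/
def wpow {α : Type*} (w : List α) (n : ℕ) : List α := (List.replicate n w).flatten

/-- `z` is `y`-bordered: `z ≠ y` and `y` is both a prefix and a suffix of `z`. -/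
def IsBordered {α : Type*} (y z : List α) : Prop := z ≠ y ∧ y <+: z ∧ y <:+ z

/-- `x` is interlaced by `y`: `y` is a subword (factor) of every `x`-bordered word. -/
def InterlacedBy {α : Type*} (x y : List α) : Prop :=
  ∀ z : List α, IsBordered x z → y <:+: z

open Finset

section Occurrences

variable {α : Type*} [DecidableEq α]

def occStartCount (x a t : List α) : ℕ :=
  #{i ∈ range a.length | x <+: (a ++ t).drop i}

/-- Counts the windows of the circular word `w`; a window may wrap around only once, so this is the
circular count only when `x.length ≤ w.length + 1`. -/
def cyclicOccCount (x w : List α) : ℕ :=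
  occStartCount x w w

theorem occCount_eq_card (x z : List α) :
    occCount x z = #{i ∈ range (z.length + 1) | x <+: z.drop i} :=
  rfl

theorem occCount_eq_zero_of_length_lt {x z : List α} (h : z.length < x.length) :
    occCount x z = 0 := by
  rw [occCount_eq_card, card_eq_zero, filter_eq_empty_iff]
  intro i _ hi
  have := hi.length_le
  simp only [List.length_drop] at this
  omega

theorem occCount_append (x a t : List α) :
    occCount x (a ++ t) = occStartCount x a t + occCount x t := by
  rw [occCount_eq_card, occCount_eq_card, occStartCount, card_filter, card_filter, card_filter,
    List.length_append, add_assoc, sum_range_add]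
  simp only [List.drop_length_add_append]

theorem occStartCount_append_left (x a b t : List α) :
    occStartCount x (a ++ b) t = occStartCount x a (b ++ t) + occStartCount x b t := by
  rw [occStartCount, occStartCount, occStartCount, card_filter, card_filter, card_filter,
    List.length_append, sum_range_add, List.append_assoc]
  simp only [List.drop_length_add_append]

omit [DecidableEq α] in
theorem List.prefix_append_iff_of_length_le {x l t : List α} (h : x.length ≤ l.length) :
    x <+: l ++ t ↔ x <+: l :=
  ⟨fun hx => List.prefix_of_prefix_length_le hx (List.prefix_append l t) h,
    fun hx => hx.trans (List.prefix_append l t)⟩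

theorem occStartCount_append_right {x : List α} (a : List α) {s : List α}
    (hs : x.length ≤ s.length + 1) (t : List α) :
    occStartCount x a (s ++ t) = occStartCount x a s := by
  unfold occStartCount
  congr 1
  refine filter_congr fun i hi => ?_
  rw [mem_range] at hi
  rw [← List.append_assoc, List.drop_append_of_le_length (by simp; omega)]
  exact List.prefix_append_iff_of_length_le (by simp; omega)

theorem occStartCount_eq_of_prefix {x s t t' : List α} (a : List α)
    (hs : x.length ≤ s.length + 1) (ht : s <+: t) (ht' : s <+: t') :
    occStartCount x a t = occStartCount x a t' := by
  obtain ⟨r, rfl⟩ := ht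
  obtain ⟨r', rfl⟩ := ht'
  rw [occStartCount_append_right a hs, occStartCount_append_right a hs]

theorem cyclicOccCount_append_comm {x u v : List α} (h : x.length ≤ (u ++ v).length + 1) :
    cyclicOccCount x (u ++ v) = cyclicOccCount x (v ++ u) := by
  have h' : x.length ≤ (v ++ u).length + 1 := by simp only [List.length_append] at *; omega
  simp only [cyclicOccCount, occStartCount_append_left]
  rw [occStartCount_eq_of_prefix u h' (t := v ++ (u ++ v)) ⟨v, by simp⟩ (List.prefix_refl _),
    occStartCount_eq_of_prefix v h (t := u ++ v) (t' := u ++ (v ++ u)) (List.prefix_refl _)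
      ⟨u, by simp⟩, add_comm]

theorem cyclicOccCount_append_of_prefix {x s u v : List α} (hs : x.length ≤ s.length + 1)
    (hu : s <+: u) (hv : s <+: v) :
    cyclicOccCount x (u ++ v) = cyclicOccCount x u + cyclicOccCount x v := by
  simp only [cyclicOccCount, occStartCount_append_left]
  rw [occStartCount_eq_of_prefix u hs (hv.trans (List.prefix_append _ _)) hu,
    occStartCount_eq_of_prefix v hs (hu.trans (List.prefix_append _ _)) hv]

theorem cyclicOccCount_flatten_of_prefix {x s : List α} (hs : x.length ≤ s.length + 1) :
    ∀ {us : List (List α)}, (∀ u ∈ us, s <+: u) →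
      cyclicOccCount x us.flatten = (us.map (cyclicOccCount x)).sum
  | [], _ => rfl
  | [u], _ => by simp
  | u :: v :: us, h => by
    have hv : s <+: (v :: us).flatten := (h v (by simp)).trans (List.prefix_append _ _)
    rw [List.flatten_cons, cyclicOccCount_append_of_prefix hs (h u (by simp)) hv,
      cyclicOccCount_flatten_of_prefix hs (fun w hw => h w (List.mem_cons_of_mem u hw))]
    simp only [List.map_cons, List.sum_cons]

theorem cyclicOccCount_flatMap_append_comm {x a : List α} (hx : x.length ≤ a.length + 1)
    (l : List (List α)) :
    cyclicOccCount x (l.flatMap (· ++ a)) = cyclicOccCount x (l.flatMap (a ++ ·)) := by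
  have rotate : ∀ l : List (List α), a ++ l.flatMap (· ++ a) = l.flatMap (a ++ ·) ++ a := by
    intro l
    induction l with
    | nil => simp
    | cons b l ih => simp only [List.flatMap_cons, List.append_assoc, ih]
  cases l with
  | nil => rfl
  | cons b l =>
    rw [List.flatMap_cons, List.flatMap_cons, List.append_assoc, rotate, ← List.append_assoc,
      cyclicOccCount_append_comm (by simp; omega), List.append_assoc]

theorem cyclicOccCount_eq_card_rotate {x u : List α} (h : x.length ≤ u.length) :
    cyclicOccCount x u = #{i ∈ range u.length | x <+: u.rotate i} := by
  unfold cyclicOccCount occStartCount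
  congr 1
  refine filter_congr fun i hi => ?_
  rw [mem_range] at hi
  have hdrop : (u ++ u).drop i = u.rotate i ++ u.drop i := by
    rw [List.drop_append_of_le_length hi.le, List.rotate_eq_drop_append_take hi.le,
      List.append_assoc, List.take_append_drop]
  rw [hdrop]
  exact List.prefix_append_iff_of_length_le (by simpa using h)

end Occurrences

section Words

variable (α : Type*) [Fintype α]

def words (n : ℕ) : Finset (List α) :=
  (univ : Finset (Fin n → α)).map ⟨List.ofFn, List.ofFn_injective⟩

variable {α}

@[simp]
theorem mem_words {n : ℕ} {l : List α} : l ∈ words α n ↔ l.length = n := by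
  simp only [words, mem_map, mem_univ, true_and, Function.Embedding.coeFn_mk]
  refine ⟨by rintro ⟨f, rfl⟩; simp, fun h => ⟨fun i => l[i], ?_⟩⟩
  subst h
  exact List.ofFn_getElem

theorem card_words (n : ℕ) : #(words α n) = Fintype.card α ^ n := by
  simp [words]

theorem sum_words_add {M : Type*} [AddCommMonoid M] (f : List α → M) (m n : ℕ) :
    ∑ u ∈ words α (m + n), f u = ∑ a ∈ words α m, ∑ b ∈ words α n, f (a ++ b) := by
  rw [← sum_product']
  refine sum_nbij' (fun u => (u.take m, u.drop m)) (fun p => p.1 ++ p.2) ?_ ?_ ?_ ?_ ?_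
  · intro u hu
    simp_all
  · intro p hp
    simp_all
  · intro u _
    simp
  · intro p hp
    simp_all
  · intro u _
    simp

theorem sum_words_comp_rotate {M : Type*} [AddCommMonoid M] (f : List α → M) (n i : ℕ) :
    ∑ u ∈ words α n, f (u.rotate i) = ∑ u ∈ words α n, f u := by
  refine sum_nbij (·.rotate i) (by simp) (fun u _ v _ h => List.rotate_injective i h) ?_
    (fun _ _ => rfl)
  intro v hv
  exact ⟨_, by simpa using hv, (List.rotate_eq_iff.2 rfl)⟩

variable [DecidableEq α]

theorem card_filter_prefix_words {x : List α} {n : ℕ} (h : x.length ≤ n) :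
    #{v ∈ words α n | x <+: v} = Fintype.card α ^ (n - x.length) := by
  rw [← card_words]
  refine card_nbij' (·.drop x.length) (x ++ ·) ?_ ?_ ?_ ?_
  · intro v hv
    simp_all
  · intro r hr
    simp_all
  · intro v hv
    exact List.prefix_iff_eq_append.1 (mem_filter.1 hv).2
  · intro r _
    simp

theorem sum_cyclicOccCount_words {x : List α} {n : ℕ} (h : x.length ≤ n) :
    ∑ u ∈ words α n, cyclicOccCount x u = n * Fintype.card α ^ (n - x.length) := by
  calc ∑ u ∈ words α n, cyclicOccCount x u
      = ∑ u ∈ words α n, ∑ i ∈ range n, if x <+: u.rotate i then 1 else 0 := by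
        refine sum_congr rfl fun u hu => ?_
        rw [mem_words] at hu
        rw [cyclicOccCount_eq_card_rotate (hu ▸ h), card_filter, hu]
    _ = ∑ i ∈ range n, #{v ∈ words α n | x <+: v} := by
        rw [sum_comm]
        refine sum_congr rfl fun i _ => ?_
        rw [sum_words_comp_rotate (fun u => if x <+: u then 1 else 0), card_filter]
    _ = n * Fintype.card α ^ (n - x.length) := by
        rw [sum_const, card_range, card_filter_prefix_words h, smul_eq_mul]

end Words

section Powers

variable {α : Type*}

theorem wpow_succ (w : List α) (m : ℕ) : wpow w (m + 1) = w ++ wpow w m := by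
  simp [wpow, List.replicate_succ]

theorem length_wpow (w : List α) (m : ℕ) : (wpow w m).length = m * w.length := by
  induction m with
  | zero => simp [wpow]
  | succ m ih => rw [wpow_succ, List.length_append, ih, add_mul, one_mul, add_comm]

theorem take_prefix_wpow_append_take (w : List α) (m j : ℕ) :
    w.take j <+: wpow w m ++ w.take j := by
  cases m with
  | zero => simp [wpow]
  | succ m =>
    rw [wpow_succ, List.append_assoc]
    exact (List.take_prefix j w).trans (List.prefix_append _ _)

variable [DecidableEq α]

/-- The tail `w.take (x.length - 1)` closes the last copy of `w` into a cycle without creating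
further occurrences of `x`. -/
theorem occCount_wpow_append_take {x w : List α} (hx : 0 < x.length)
    (hw : x.length ≤ w.length + 1) (m : ℕ) :
    occCount x (wpow w m ++ w.take (x.length - 1)) = m * cyclicOccCount x w := by
  induction m with
  | zero =>
    rw [zero_mul, wpow, List.replicate_zero, List.flatten_nil, List.nil_append]
    exact occCount_eq_zero_of_length_lt (by simp; omega)
  | succ m ih =>
    have hs : x.length ≤ (w.take (x.length - 1)).length + 1 := by simp; omega
    rw [wpow_succ, List.append_assoc, occCount_append, ih, cyclicOccCount,
      occStartCount_eq_of_prefix w hs (take_prefix_wpow_append_take w m _) (List.take_prefix _ w),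
      add_mul, one_mul, add_comm]

end Powers

section BalancedWord

variable (α : Type*) [Fintype α]

noncomputable def balancedWord (j : ℕ) : List α :=
  (words α j).toList.flatMap fun a => (words α j).toList.flatMap fun b => b ++ a

variable {α}

theorem length_balancedWord (j : ℕ) :
    (balancedWord α j).length = Fintype.card α ^ j * (Fintype.card α ^ j * (j + j)) := by
  simp only [balancedWord, List.length_flatMap, List.length_append, sum_map_toList]
  rw [sum_congr rfl fun a ha => sum_congr rfl fun b hb => by rw [mem_words.1 ha, mem_words.1 hb]]
  simp [card_words]

variable [DecidableEq α]

theorem cyclicOccCount_balancedWord [Nonempty α] {x : List α} {j : ℕ} (hx : x.length ≤ j) :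
    cyclicOccCount x (balancedWord α j) = (j + j) * Fintype.card α ^ (j + j - x.length) := by
  set L := (words α j).toList
  have hL : ∀ a ∈ L, a.length = j := fun a ha => mem_words.1 (mem_toList.1 ha)
  obtain ⟨b₀, L', hL'⟩ : ∃ b₀ L', L = b₀ :: L' := by
    refine List.exists_cons_of_ne_nil fun h => ?_
    have : List.replicate j (Classical.arbitrary α) ∈ L := by simp [L]
    simp [h] at this
  have hb₀ : b₀.length = j := hL b₀ (hL' ▸ List.mem_cons_self)
  calc cyclicOccCount x (balancedWord α j)
      = (L.map fun a => cyclicOccCount x (L.flatMap (· ++ a))).sum := by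
        rw [show balancedWord α j = L.flatMap (fun a => L.flatMap (· ++ a)) from rfl,
          List.flatMap_def, cyclicOccCount_flatten_of_prefix (s := b₀) (by omega),
          List.map_map]
        · rfl
        · simp only [List.mem_map]
          rintro _ ⟨a, -, rfl⟩
          rw [hL', List.flatMap_cons, List.append_assoc]
          exact List.prefix_append _ _
    _ = (L.map fun a => cyclicOccCount x (L.flatMap (a ++ ·))).sum := by
        refine congrArg List.sum (List.map_congr_left fun a ha => ?_)
        exact cyclicOccCount_flatMap_append_comm (by rw [hL a ha]; omega) L
    _ = (L.map fun a => (L.map fun b => cyclicOccCount x (a ++ b)).sum).sum := by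
        refine congrArg List.sum (List.map_congr_left fun a ha => ?_)
        rw [List.flatMap_def, cyclicOccCount_flatten_of_prefix (s := a) (by rw [hL a ha]; omega),
          List.map_map]
        · rfl
        · simp only [List.mem_map]
          rintro _ ⟨b, -, rfl⟩
          exact List.prefix_append _ _
    _ = ∑ a ∈ words α j, ∑ b ∈ words α j, cyclicOccCount x (a ++ b) := by
        simp only [L, sum_map_toList]
    _ = (j + j) * Fintype.card α ^ (j + j - x.length) := by
        rw [← sum_words_add, sum_cyclicOccCount_words (by omega)]

end BalancedWord

theorem setOf_forall_occCount_eq_infinite {α : Type*} [Fintype α] [DecidableEq α] [Nonempty α]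
    (k : ℕ) :
    {z : List α | ∀ x y : List α, x.length = k → y.length = k →
      occCount x z = occCount y z}.Infinite := by
  -- `k + 1` rather than `k` keeps `w` nonempty when `k = 0`.
  set w := balancedWord α (k + 1)
  have hw : k + 1 + (k + 1) ≤ w.length := by
    have hq : 1 ≤ Fintype.card α ^ (k + 1) := Nat.one_le_pow _ _ Fintype.card_pos
    rw [length_balancedWord]
    calc k + 1 + (k + 1) = 1 * (1 * (k + 1 + (k + 1))) := by ring
      _ ≤ _ := by gcongr
  refine Set.infinite_of_injective_forall_mem (f := fun m : ℕ => wpow w m ++ w.take (k - 1)) ?_ ?_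
  · intro m m' h
    have h := congrArg List.length h
    simp only [List.length_append, length_wpow, add_left_inj] at h
    exact Nat.eq_of_mul_eq_mul_right (by omega) h
  · intro m x y hx hy
    rcases Nat.eq_zero_or_pos k with rfl | hk
    · rw [List.length_eq_zero_iff.1 hx, List.length_eq_zero_iff.1 hy]
    · have count : ∀ z : List α, z.length = k → occCount z (wpow w m ++ w.take (k - 1)) =
          m * ((k + 1 + (k + 1)) * Fintype.card α ^ (k + 1 + (k + 1) - k)) := by
        intro z hz
        subst hz
        rw [occCount_wpow_append_take hk (by omega),
          cyclicOccCount_balancedWord (by omega)]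
      rw [count x hx, count y hy]

theorem stmt_18_general {α : Type} [Fintype α] [DecidableEq α] [Nonempty α]
    (n : ℕ) (xs : Fin n → List α)
    (hlen : ∀ i j, (xs i).length = (xs j).length) :
    {z : List α | ∀ i j, occCount (xs i) z = occCount (xs j) z}.Infinite := by
  obtain ⟨k, hk⟩ : ∃ k, ∀ i, (xs i).length = k := by
    rcases isEmpty_or_nonempty (Fin n) with h | ⟨⟨i₀⟩⟩
    · exact ⟨0, fun i => h.elim i⟩
    · exact ⟨_, fun i => hlen i i₀⟩
  refine (setOf_forall_occCount_eq_infinite k).mono fun z hz i j => ?_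
  exact hz _ _ (hk i) (hk j)

theorem stmt_18 {α : Type} [Fintype α] [DecidableEq α] [Nonempty α]
    (n : ℕ) (xs : Fin n → List α) (hne : ∀ i, xs i ≠ [])
    (hlen : ∀ i j, (xs i).length = (xs j).length) :
    {z : List α | ∀ i j, occCount (xs i) z = occCount (xs j) z}.Infinite :=
  stmt_18_general n xs hlen
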